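/- (Varshamov–Gilbert) For every n ≥ 8 there exist M + 1 elements θ_0, ..., θ_M of {0,1}^n with θ_0 = 0, M ≥ 2^{n/8}, and Hamming distance H(θ_j, θ_k) ≥ n/8 for all 0 ≤ j < k ≤ M. -/
import Mathlib

open Finset

private lemma vg_sum_weight (n : ℕ) (x : Fin n → Bool) :
    ∑ y : Fin n → Bool, 7 ^ (n - hammingDist x y) = 8 ^ n := by
  have key : ∀ y : Fin n → Bool, (7:ℕ) ^ (n - hammingDist x y)
      = ∏ j : Fin n, (if x j = y j then 7 else 1) := by
    intro y
    rw [Finset.prod_ite, Finset.prod_const, Finset.prod_const_one, mul_one]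
    congr 1
    have := Finset.card_filter_add_card_filter_not
      (s := (univ : Finset (Fin n))) (p := fun j => x j = y j)
    simp only [Finset.card_univ, Fintype.card_fin] at this
    have hd : hammingDist x y = #{j | ¬ x j = y j} := by
      simp [hammingDist, Ne]
    omega
  calc ∑ y : Fin n → Bool, (7:ℕ) ^ (n - hammingDist x y)
      = ∑ y : Fin n → Bool, ∏ j, (if x j = y j then 7 else 1) := by
        simp_rw [key]
    _ = ∏ j : Fin n, ∑ b : Bool, (if x j = b then 7 else 1) :=
        (Fintype.prod_sum (fun (j : Fin n) (b : Bool) => if x j = b then (7:ℕ) else 1)).symm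
    _ = 8 ^ n := by
      have h8 : ∀ j : Fin n, ∑ b : Bool, (if x j = b then (7:ℕ) else 1) = 8 := by
        intro j; cases h : x j <;> simp
      rw [Finset.prod_congr rfl fun j _ => h8 j, Finset.prod_const, Finset.card_univ,
        Fintype.card_fin]

private lemma vg_pow (n : ℕ) (hn : 8 ≤ n) : 2 ^ (17*n+8) ≤ 7 ^ (7*n+1) := by
  induction n, hn using Nat.le_induction with
  | base => norm_num
  | succ m hm ih =>
      have h1 : 2 ^ (17*(m+1)+8) = 2 ^ (17*m+8) * 2^17 := by ring
      have h2 : 7 ^ (7*(m+1)+1) = 7 ^ (7*m+1) * 7^7 := by ring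
      rw [h1, h2]
      exact Nat.mul_le_mul ih (by norm_num)

/-- Varshamov–Gilbert bound: for every `n ≥ 8` there exist `M + 1` binary strings
`θ_0, …, θ_M ∈ {0,1}^n` with `θ_0 = 0`, `M ≥ 2^{n/8}`, and pairwise Hamming
distance at least `n/8`. -/
theorem stmt_4 (n : ℕ) (hn : 8 ≤ n) :
    ∃ (M : ℕ) (θ : Fin (M + 1) → (Fin n → Bool)),
      θ 0 = (fun _ => false) ∧
      (2 : ℝ) ^ ((n : ℝ) / 8) ≤ M ∧
      ∀ j k, j ≠ k → (n : ℝ) / 8 ≤ hammingDist (θ j) (θ k) := by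
  classical
  set z : Fin n → Bool := fun _ => false with hz
  set d : ℕ := (n+7)/8 with hdd
  have hd1 : 1 ≤ d := by omega
  have hdn : n ≤ 8 * d := by omega
  have hdn' : 8 * d ≤ n + 7 := by omega
  set r : ℕ := d - 1 with hr
  -- maximal code
  let IsCode : Finset (Fin n → Bool) → Prop := fun C =>
    z ∈ C ∧ ∀ x ∈ C, ∀ y ∈ C, x ≠ y → d ≤ hammingDist x y
  have hne : ((univ : Finset (Finset (Fin n → Bool))).filter IsCode).Nonempty := by
    refine ⟨{z}, ?_⟩
    simp only [Finset.mem_filter, Finset.mem_univ, true_and]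
    exact ⟨Finset.mem_singleton_self z, by
      intro x hx y hy hxy
      rw [Finset.mem_singleton] at hx hy
      exact absurd (hx.trans hy.symm) hxy⟩
  obtain ⟨C, hCmem, hmax⟩ := Finset.exists_max_image _ Finset.card hne
  rw [Finset.mem_filter] at hCmem
  obtain ⟨-, hzC, hcode⟩ := hCmem
  -- covering property
  have cover : ∀ y : Fin n → Bool, ∃ x ∈ C, hammingDist x y ≤ r := by
    intro y
    by_contra hcon
    push_neg at hcon
    have hyC : y ∉ C := fun hy => by
      have := hcon y hy
      rw [hammingDist_self] at this
      omega
    have hins : IsCode (insert y C) := by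
      constructor
      · exact Finset.mem_insert_of_mem hzC
      · intro a ha b hb hab
        rw [Finset.mem_insert] at ha hb
        rcases ha with ha | ha <;> rcases hb with hb | hb
        · exact absurd (ha.trans hb.symm) hab
        · subst ha; have := hcon b hb; rw [hammingDist_comm]; omega
        · subst hb; have := hcon a ha; omega
        · exact hcode a ha b hb hab
    have hle := hmax (insert y C) (Finset.mem_filter.mpr ⟨Finset.mem_univ _, hins⟩)
    rw [Finset.card_insert_of_notMem hyC] at hle
    omega
  -- ball bound
  have hball : ∀ x : Fin n → Bool,
      (#{y : Fin n → Bool | hammingDist x y ≤ r}) * 7 ^ (n - r) ≤ 8 ^ n := by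
    intro x
    calc (#{y : Fin n → Bool | hammingDist x y ≤ r}) * 7 ^ (n - r)
        = ∑ y ∈ ({y : Fin n → Bool | hammingDist x y ≤ r} : Finset _), 7 ^ (n - r) := by
          rw [Finset.sum_const, smul_eq_mul]
      _ ≤ ∑ y ∈ ({y : Fin n → Bool | hammingDist x y ≤ r} : Finset _),
            7 ^ (n - hammingDist x y) := by
          refine Finset.sum_le_sum ?_
          intro y hy
          rw [Finset.mem_filter] at hy
          exact Nat.pow_le_pow_right (by norm_num) (by omega)
      _ ≤ ∑ y : Fin n → Bool, 7 ^ (n - hammingDist x y) :=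
          Finset.sum_le_sum_of_subset (Finset.filter_subset _ _)
      _ = 8 ^ n := vg_sum_weight n x
  -- counting
  have hcount : 2 ^ n * 7 ^ (n - r) ≤ C.card * 8 ^ n := by
    have hcov : (univ : Finset (Fin n → Bool)) ⊆
        C.biUnion (fun x => {y : Fin n → Bool | hammingDist x y ≤ r}) := by
      intro y _
      obtain ⟨x, hxC, hxy⟩ := cover y
      exact Finset.mem_biUnion.mpr ⟨x, hxC, by simpa using hxy⟩
    have h1 : 2 ^ n ≤ ∑ x ∈ C, #{y : Fin n → Bool | hammingDist x y ≤ r} := by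
      calc 2 ^ n = Fintype.card (Fin n → Bool) := by simp
        _ = (univ : Finset (Fin n → Bool)).card := (Finset.card_univ).symm
        _ ≤ (C.biUnion fun x => {y : Fin n → Bool | hammingDist x y ≤ r}).card :=
            Finset.card_le_card hcov
        _ ≤ ∑ x ∈ C, #{y : Fin n → Bool | hammingDist x y ≤ r} :=
            Finset.card_biUnion_le
    calc 2 ^ n * 7 ^ (n - r)
        ≤ (∑ x ∈ C, #{y : Fin n → Bool | hammingDist x y ≤ r}) * 7 ^ (n - r) :=
          Nat.mul_le_mul_right _ h1
      _ = ∑ x ∈ C, (#{y : Fin n → Bool | hammingDist x y ≤ r}) * 7 ^ (n - r) :=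
          Finset.sum_mul _ _ _
      _ ≤ ∑ x ∈ C, 8 ^ n := Finset.sum_le_sum fun x _ => hball x
      _ = C.card * 8 ^ n := by rw [Finset.sum_const, smul_eq_mul]
  -- lower bound on C.card
  set s : ℕ := n - r with hs
  have h8s : 7 * n + 1 ≤ 8 * s := by omega
  have hnat : 2 ^ (n + 8) * 8 ^ (8 * n) ≤ 2 ^ (8 * n) * 7 ^ (8 * s) := by
    have h83 : (8:ℕ) ^ (8*n) = 2 ^ (24*n) := by
      rw [show (8:ℕ) = 2^3 by norm_num, ← pow_mul]; ring_nf
    rw [h83, ← pow_add]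
    calc (2:ℕ) ^ (n + 8 + 24*n) = 2 ^ (8*n) * 2 ^ (17*n+8) := by rw [← pow_add]; ring_nf
      _ ≤ 2 ^ (8*n) * 7 ^ (7*n+1) := Nat.mul_le_mul_left _ (vg_pow n hn)
      _ ≤ 2 ^ (8*n) * 7 ^ (8*s) :=
          Nat.mul_le_mul_left _ (Nat.pow_le_pow_right (by norm_num) h8s)
  -- real inequality
  have hAreal : (2:ℝ) ^ ((n:ℝ)/8) + 1 ≤ C.card := by
    have hpow8 : ((2:ℝ) ^ ((n:ℝ)/8 + 1) * 8 ^ n) ^ 8 ≤ ((2:ℝ) ^ n * 7 ^ s) ^ 8 := by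
      have e1 : ((2:ℝ) ^ ((n:ℝ)/8 + 1) * 8 ^ n) ^ 8 = (2:ℝ) ^ (n+8) * 8 ^ (8*n) := by
        rw [mul_pow, ← Real.rpow_natCast ((2:ℝ) ^ ((n:ℝ)/8+1)) 8, ← Real.rpow_mul (by norm_num)]
        rw [show ((n:ℝ)/8 + 1) * (8:ℕ) = ((n + 8 : ℕ) : ℝ) by push_cast; ring]
        rw [Real.rpow_natCast, ← pow_mul]
        ring_nf
      have e2 : ((2:ℝ) ^ n * 7 ^ s) ^ 8 = (2:ℝ) ^ (8*n) * 7 ^ (8*s) := by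
        rw [mul_pow, ← pow_mul, ← pow_mul]; ring_nf
      rw [e1, e2]
      exact_mod_cast hnat
    have hmul : (2:ℝ) ^ ((n:ℝ)/8 + 1) * 8 ^ n ≤ (2:ℝ) ^ n * 7 ^ s := by
      have h1 : (0:ℝ) ≤ (2:ℝ) ^ ((n:ℝ)/8 + 1) * 8 ^ n :=
        mul_nonneg (Real.rpow_nonneg (by norm_num) _) (by positivity)
      have h2 : (0:ℝ) ≤ (2:ℝ) ^ n * 7 ^ s := by positivity
      exact le_of_pow_le_pow_left₀ (by norm_num) h2 hpow8
    have hC8 : (2:ℝ) ^ ((n:ℝ)/8 + 1) ≤ C.card := by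
      have h8pos : (0:ℝ) < 8 ^ n := by positivity
      have hcount' : (2:ℝ) ^ n * 7 ^ s ≤ (C.card : ℝ) * 8 ^ n := by exact_mod_cast hcount
      exact le_of_mul_le_mul_right (hmul.trans hcount') h8pos
    have hone : (1:ℝ) ≤ (2:ℝ) ^ ((n:ℝ)/8) :=
      Real.one_le_rpow (by norm_num) (by positivity)
    calc (2:ℝ) ^ ((n:ℝ)/8) + 1 ≤ (2:ℝ) ^ ((n:ℝ)/8) + (2:ℝ) ^ ((n:ℝ)/8) := by linarith
      _ = (2:ℝ) ^ ((n:ℝ)/8 + 1) := by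
          rw [Real.rpow_add (by norm_num), Real.rpow_one]; ring
      _ ≤ C.card := hC8
  -- construct the enumeration
  have hA1 : 1 ≤ C.card := Finset.card_pos.mpr ⟨z, hzC⟩
  refine ⟨C.card - 1, ?_⟩
  have hM1 : C.card - 1 + 1 = C.card := by omega
  have hcard : (C.erase z).card = C.card - 1 := Finset.card_erase_of_mem hzC
  let e : ↥(C.erase z) ≃ Fin (C.card - 1) := (C.erase z).equivFin.trans (finCongr hcard)
  let θ : Fin (C.card - 1 + 1) → (Fin n → Bool) :=
    Fin.cases z (fun i => ((e.symm i : ↥(C.erase z)) : Fin n → Bool))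
  have hθ0 : θ 0 = z := rfl
  have hθsucc : ∀ i : Fin (C.card - 1), θ i.succ = ((e.symm i : ↥(C.erase z)) : Fin n → Bool) :=
    fun i => rfl
  have hθmem : ∀ j, θ j ∈ C := by
    intro j
    induction j using Fin.cases with
    | zero => exact hzC
    | succ i =>
        rw [hθsucc i]
        exact Finset.mem_of_mem_erase (e.symm i).2
  have hθne : ∀ j k : Fin (C.card - 1 + 1), j ≠ k → θ j ≠ θ k := by
    have hsz : ∀ i : Fin (C.card - 1), θ i.succ ≠ z := by
      intro i
      rw [hθsucc i]
      exact Finset.ne_of_mem_erase (e.symm i).2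
    have hssucc : ∀ i i' : Fin (C.card - 1), i ≠ i' → θ i.succ ≠ θ i'.succ := by
      intro i i' hii hcon
      rw [hθsucc i, hθsucc i'] at hcon
      exact hii (e.symm.injective (Subtype.ext hcon))
    intro j k hjk
    induction j using Fin.cases with
    | zero =>
        induction k using Fin.cases with
        | zero => exact absurd rfl hjk
        | succ i => exact fun hcon => hsz i hcon.symm
    | succ i =>
        induction k using Fin.cases with
        | zero => exact hsz i
        | succ i' =>
            refine hssucc i i' (fun hii => hjk ?_)
            rw [hii]
  refine ⟨θ, hθ0, ?_, ?_⟩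
  · have : ((C.card - 1 : ℕ) : ℝ) = (C.card : ℝ) - 1 := by
      rw [Nat.cast_sub hA1, Nat.cast_one]
    rw [this]; linarith
  · intro j k hjk
    have hd : d ≤ hammingDist (θ j) (θ k) :=
      hcode _ (hθmem j) _ (hθmem k) (hθne j k hjk)
    have : (n:ℝ)/8 ≤ d := by
      rw [div_le_iff₀ (by norm_num)]
      have h8d : (n:ℝ) ≤ 8 * (d:ℝ) := by exact_mod_cast hdn
      linarith
    calc (n:ℝ)/8 ≤ d := this
      _ ≤ hammingDist (θ j) (θ k) := by exact_mod_cast hd
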